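/- With three states, the greedy strategy need not be optimal for all initial distributions, even when φ is a homothety. Concretely: let Ω = {1,2,3}, let δ ∈ (0,1) and ε > 0 satisfy 8ε < δ(1−δ), let r(1) = 1, r(2) = −ε/(1−ε), r(3) = −1, let m ∈ Δ(Ω) be the Dirac mass on state 2, let φ(p) = m + (1/2)·(p − m), and let p₁ := (2ε, 0, 1−2ε). Then the greedy payoff satisfies γ(p₁) ≤ 4ε, while every bounded function V satisfying the dynamic programming equation satisfies V(p₁) ≥ δ(1−δ)/2; in particular V(p₁) > γ(p₁). -/

import Mathlib

open MeasureTheory Set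

noncomputable section

variable {Ω : Type*}

/-- The investment region `I = {p ∈ Δ(Ω) : ⟨p,r⟩ ≥ 0}`. -/
def invest [Fintype Ω] (r : Ω → ℝ) : Set (Ω → ℝ) :=
  {p | p ∈ stdSimplex ℝ Ω ∧ 0 ≤ ∑ ω, p ω * r ω}

/-- The set `S(p)` of splittings at `p`: Borel probability measures on `ℝ^Ω` carried by the
simplex `Δ(Ω)` with barycenter `p`. -/
def Splittings [Fintype Ω] (p : Ω → ℝ) : Set (Measure (Ω → ℝ)) :=
  {μ | IsProbabilityMeasure μ ∧ μ (stdSimplex ℝ Ω) = 1 ∧ ∫ q, q ∂μ = p}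

/-- The payoff `(1−δ)·μ(I) + δ·∫ V(φ(q)) dμ(q)` appearing in the dynamic programming
equation. -/
def dppPayoff [Fintype Ω] (r : Ω → ℝ) (δ : ℝ) (φ : (Ω → ℝ) → Ω → ℝ)
    (V : (Ω → ℝ) → ℝ) (μ : Measure (Ω → ℝ)) : ℝ :=
  (1 - δ) * (μ (invest r)).toReal + δ * ∫ q in stdSimplex ℝ Ω, V (φ q) ∂μ

/-- `V` satisfies the dynamic programming equation
`V(p) = sup_{μ ∈ S(p)} [(1−δ)·μ(I) + δ·∫ V(φ(q)) dμ(q)]` on the simplex. -/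
def SatisfiesDPP [Fintype Ω] (r : Ω → ℝ) (δ : ℝ) (φ : (Ω → ℝ) → Ω → ℝ)
    (V : (Ω → ℝ) → ℝ) : Prop :=
  ∀ p ∈ stdSimplex ℝ Ω, V p = sSup (dppPayoff r δ φ V '' Splittings p)

/-- `L_k(p) = Σ_{ω∈Ω⁺} p(ω)r(ω) + Σ_{i≤k} p(ω_i)r(ω_i)`, where `ω_{i+1} = e i` enumerates
`Ω⁻` by decreasing payoff. -/
def Lfun [Fintype Ω] (r : Ω → ℝ) {K : ℕ} (e : Fin K → Ω) (k : ℕ) (p : Ω → ℝ) : ℝ :=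
  ∑ ω ∈ Finset.univ.filter (fun ω => 0 ≤ r ω), p ω * r ω
    + ∑ i ∈ Finset.univ.filter (fun i : Fin K => (i : ℕ) + 1 ≤ k), p (e i) * r (e i)

/-- `k*(p) = min {k ≥ 1 : L_k(p) ≤ 0}`. -/
def kstar [Fintype Ω] (r : Ω → ℝ) {K : ℕ} (e : Fin K → Ω) (p : Ω → ℝ) : ℕ :=
  sInf {k : ℕ | 1 ≤ k ∧ Lfun r e k p ≤ 0}

/-- The optimal solution `π*(p)` of the program (LP'): it agrees with `p` on `Ω⁺` and on
`ω_i` for `i < k*(p)`, vanishes on `ω_i` for `i > k*(p)`, and equals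
`−L_{k*(p)−1}(p)/r(ω_{k*(p)})` at `ω_{k*(p)}`. -/
def piStar [Fintype Ω] [DecidableEq Ω] (r : Ω → ℝ) {K : ℕ} (e : Fin K → Ω) (p : Ω → ℝ) :
    Ω → ℝ :=
  (fun ω => if 0 ≤ r ω then p ω else 0)
    + ∑ i : Fin K,
        (if (i : ℕ) + 1 < kstar r e p then p (e i)
         else if (i : ℕ) + 1 = kstar r e p then -(Lfun r e (kstar r e p - 1) p) / r (e i)
         else 0) • (Pi.single (e i) 1 : Ω → ℝ)

/-- The weight `a_I` of the greedy splitting: the total mass of `π*(p)`. -/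
def aI [Fintype Ω] [DecidableEq Ω] (r : Ω → ℝ) {K : ℕ} (e : Fin K → Ω) (p : Ω → ℝ) : ℝ :=
  ∑ ω, piStar r e p ω

/-- The posterior `q_I` of the greedy splitting: the normalization of `π*(p)`. -/
def qI [Fintype Ω] [DecidableEq Ω] (r : Ω → ℝ) {K : ℕ} (e : Fin K → Ω) (p : Ω → ℝ) :
    Ω → ℝ :=
  (aI r e p)⁻¹ • piStar r e p

/-- The posterior `q_J` of the greedy splitting: the normalization of `p − π*(p)`. -/
def qJ [Fintype Ω] [DecidableEq Ω] (r : Ω → ℝ) {K : ℕ} (e : Fin K → Ω) (p : Ω → ℝ) :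
    Ω → ℝ :=
  (1 - aI r e p)⁻¹ • (p - piStar r e p)

/-!
The greedy payoff is at most `1` everywhere: writing `M` for its supremum over `Δ(Ω)`, both
recursions give `γ ≤ (1 - δ) + δ M`, so `M ≤ 1`. On the face of beliefs supported on `Ω⁻` the
greedy splitting is trivial (`π* = 0`), so there `γ(p) = δ γ(φ p)`; as the homothety preserves
this face, the same argument gives `γ ≤ 0` on it. The posterior `q_J` always lies on this face,
hence `γ(p) ≤ a_I(p)` on `J`, and `a_I(p₁) = 4ε`.

Conversely, the Dirac splitting shows `V(p) ≥ δ V(φ p)` for a solution `V` of the dynamic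
programming equation, whence `V ≥ 0`. Splitting `φ(p₁) = (ε, 1/2, 1/2 - ε)` evenly into
`(2ε, 1 - 2ε, 0) ∈ I` and `(0, 2ε, 1 - 2ε)` gives `V(φ p₁) ≥ (1 - δ)/2`, so
`V(p₁) ≥ δ(1 - δ)/2 > 4ε`.
-/

open Function

theorem forall_le_of_forall_le_add_mul {α : Type*} {S : Set α} {f : α → ℝ} {b δ : ℝ}
    (hδ : δ < 1) (hf : BddAbove (f '' S))
    (h : ∀ M, (∀ y ∈ S, f y ≤ M) → ∀ x ∈ S, f x ≤ (1 - δ) * b + δ * M) :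
    ∀ x ∈ S, f x ≤ b := by
  intro x hx
  have hM : ∀ y ∈ S, f y ≤ sSup (f '' S) := fun y hy => le_csSup hf (mem_image_of_mem f hy)
  have hMb : sSup (f '' S) ≤ (1 - δ) * b + δ * sSup (f '' S) :=
    csSup_le ⟨f x, mem_image_of_mem f hx⟩ (forall_mem_image.2 (h _ hM))
  have : sSup (f '' S) ≤ b := by nlinarith
  exact (hM x hx).trans this

theorem inv_sum_smul_mem_stdSimplex {ι : Type*} [Fintype ι] {v : ι → ℝ} (hv : 0 ≤ v)
    (hs : 0 < ∑ i, v i) : (∑ i, v i)⁻¹ • v ∈ stdSimplex ℝ ι :=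
  ⟨fun i => mul_nonneg (inv_nonneg.2 hs.le) (hv i), by
    simp only [Pi.smul_apply, smul_eq_mul, ← Finset.mul_sum, inv_mul_cancel₀ hs.ne']⟩

section Greedy

variable [Fintype Ω] {r : Ω → ℝ} {K : ℕ} {e : Fin K → Ω} {p : Ω → ℝ}

theorem Lfun_succ (j : Fin K) : Lfun r e (j + 1) p = Lfun r e j p + p (e j) * r (e j) := by
  simp only [Lfun, Finset.sum_filter, add_assoc]
  congr 1
  have hsplit : ∀ i : Fin K, (if (i : ℕ) + 1 ≤ j + 1 then p (e i) * r (e i) else 0)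
      = (if (i : ℕ) + 1 ≤ j then p (e i) * r (e i) else 0)
        + if i = j then p (e i) * r (e i) else 0 := by
    intro i
    by_cases hij : i = j
    · simp [hij]
    · have : (i : ℕ) ≠ j := Fin.val_ne_of_ne hij
      by_cases hi : (i : ℕ) + 1 ≤ j
      · simp [hi, hij, show (i : ℕ) + 1 ≤ j + 1 by omega]
      · simp [hi, hij, show ¬(i : ℕ) + 1 ≤ j + 1 by omega]
  simp only [hsplit, Finset.sum_add_distrib, Finset.sum_ite_eq', Finset.mem_univ, if_true]

theorem Lfun_zero_nonneg (hp : 0 ≤ p) : 0 ≤ Lfun r e 0 p :=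
  add_nonneg (Finset.sum_nonneg fun ω hω => mul_nonneg (hp ω) (Finset.mem_filter.1 hω).2)
    (Finset.sum_nonneg fun i hi => by simp at hi)

theorem kstar_eq {k : ℕ} (hk : 1 ≤ k) (hLk : Lfun r e k p ≤ 0)
    (hlt : ∀ j, 1 ≤ j → j < k → 0 < Lfun r e j p) : kstar r e p = k :=
  le_antisymm (Nat.sInf_le ⟨hk, hLk⟩) <| le_csInf ⟨k, hk, hLk⟩ fun j ⟨hj, hLj⟩ =>
    not_lt.1 fun hjk => (hlt j hj hjk).not_ge hLj

def negFace (r : Ω → ℝ) : Set (Ω → ℝ) :=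
  {p | p ∈ stdSimplex ℝ Ω ∧ ∀ ω, 0 ≤ r ω → p ω = 0}

theorem sum_mul_neg_of_mem_negFace (hp : p ∈ negFace r) : ∑ ω, p ω * r ω < 0 := by
  obtain ⟨ω₀, hω₀⟩ : ∃ ω, 0 < p ω := by
    by_contra! h
    linarith [hp.1.2, Finset.sum_nonpos fun ω (_ : ω ∈ Finset.univ) => h ω]
  have hr₀ : r ω₀ < 0 := not_le.1 fun h => hω₀.ne' (hp.2 ω₀ h)
  have hterm : ∀ ω, p ω * r ω ≤ 0 := fun ω => by
    by_cases h : 0 ≤ r ω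
    · simp [hp.2 ω h]
    · exact mul_nonpos_of_nonneg_of_nonpos (hp.1.1 ω) (not_le.1 h).le
  calc ∑ ω, p ω * r ω < ∑ _ω : Ω, (0 : ℝ) := Finset.sum_lt_sum (fun ω _ => hterm ω)
        ⟨ω₀, Finset.mem_univ _, mul_neg_of_pos_of_neg hω₀ hr₀⟩
    _ = 0 := Finset.sum_const_zero

theorem convex_negFace : Convex ℝ (negFace r) :=
  (convex_stdSimplex ℝ Ω).inter fun x hx y hy a b _ _ _ ω hω => by simp [hx ω hω, hy ω hω]

-- `piStarCoeff r e p i = π*(p)(ω_{i+1})`, the enumeration being `ω_{i+1} = e i`.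
def piStarCoeff (r : Ω → ℝ) (e : Fin K → Ω) (p : Ω → ℝ) (i : Fin K) : ℝ :=
  if (i : ℕ) + 1 < kstar r e p then p (e i)
  else if (i : ℕ) + 1 = kstar r e p then -(Lfun r e (kstar r e p - 1) p) / r (e i)
  else 0

theorem piStarCoeff_mem_Icc (hneg : ∀ i, r (e i) < 0) (hp : 0 ≤ p) (i : Fin K) :
    piStarCoeff r e p i ∈ Icc 0 (p (e i)) := by
  unfold piStarCoeff
  split_ifs with hlt hk
  · exact ⟨hp _, le_rfl⟩
  · have hk' : kstar r e p = i + 1 := hk.symm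
    have hLk : Lfun r e (i + 1) p ≤ 0 := by
      have hne : {k : ℕ | 1 ≤ k ∧ Lfun r e k p ≤ 0}.Nonempty :=
        Nat.nonempty_of_pos_sInf (show 0 < kstar r e p by omega)
      have := (Nat.sInf_mem hne).2
      change Lfun r e (kstar r e p) p ≤ 0 at this
      rwa [hk'] at this
    have hLi : 0 ≤ Lfun r e i p := by
      rcases Nat.eq_zero_or_pos i with h0 | hpos
      · rw [h0]; exact Lfun_zero_nonneg hp
      · exact le_of_lt <| not_le.1 fun hle =>
          Nat.notMem_of_lt_sInf (show (i : ℕ) < kstar r e p by omega) ⟨hpos, hle⟩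
    rw [hk', Nat.add_sub_cancel]
    rw [Lfun_succ] at hLk
    constructor
    · exact div_nonneg_of_nonpos (by linarith) (hneg i).le
    · rw [div_le_iff_of_neg (hneg i)]; linarith
  · exact ⟨le_rfl, hp _⟩

variable [DecidableEq Ω]

theorem piStar_eq : piStar r e p = (fun ω => if 0 ≤ r ω then p ω else 0)
    + ∑ i, piStarCoeff r e p i • (Pi.single (e i) 1 : Ω → ℝ) := rfl

theorem piStar_apply (ω : Ω) : piStar r e p ω = (if 0 ≤ r ω then p ω else 0)
    + ∑ i, piStarCoeff r e p i * (Pi.single (e i) 1 : Ω → ℝ) ω := by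
  simp [piStar_eq, Finset.sum_apply]

theorem piStar_apply_apply (he : Injective e) (hneg : ∀ i, r (e i) < 0) (j : Fin K) :
    piStar r e p (e j) = piStarCoeff r e p j := by
  rw [piStar_apply, if_neg (hneg j).not_ge, zero_add,
    Finset.sum_eq_single j (fun i _ hij => by simp [he.ne hij.symm]) (by simp)]
  simp

theorem piStar_apply_of_notMem_range {ω : Ω} (hω : ω ∉ range e) :
    piStar r e p ω = if 0 ≤ r ω then p ω else 0 := by
  rw [piStar_apply, add_eq_left]
  exact Finset.sum_eq_zero fun i _ => by
    simp [show ω ≠ e i from fun h => hω ⟨i, h.symm⟩]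

theorem piStar_apply_of_nonneg (hneg : ∀ i, r (e i) < 0) {ω : Ω} (hω : 0 ≤ r ω) :
    piStar r e p ω = p ω := by
  rw [piStar_apply_of_notMem_range, if_pos hω]
  rintro ⟨i, rfl⟩
  exact (hneg i).not_ge hω

theorem piStar_nonneg (hneg : ∀ i, r (e i) < 0) (hp : 0 ≤ p) : 0 ≤ piStar r e p := fun ω => by
  rw [piStar_apply]
  refine add_nonneg (by split_ifs; exacts [hp ω, le_rfl]) (Finset.sum_nonneg fun i _ => ?_)
  exact mul_nonneg (piStarCoeff_mem_Icc hneg hp i).1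
    ((Pi.single_nonneg.2 zero_le_one : (0 : Ω → ℝ) ≤ _) ω)

theorem piStar_le (he : Injective e) (hneg : ∀ i, r (e i) < 0) (hp : 0 ≤ p) :
    piStar r e p ≤ p := fun ω => by
  by_cases hω : ω ∈ range e
  · obtain ⟨j, rfl⟩ := hω
    rw [piStar_apply_apply he hneg]
    exact (piStarCoeff_mem_Icc hneg hp j).2
  · rw [piStar_apply_of_notMem_range hω]
    split_ifs
    exacts [le_rfl, hp ω]

theorem piStar_eq_zero (hK : 0 < K) (hneg : ∀ i, r (e i) < 0) (hp : 0 ≤ p)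
    (hpos : ∀ ω, 0 ≤ r ω → p ω = 0) : piStar r e p = 0 := by
  have hL0 : Lfun r e 0 p = 0 := by
    simp only [Lfun, Nat.le_zero, Nat.add_one_ne_zero, Finset.filter_false, Finset.sum_empty,
      add_zero]
    exact Finset.sum_eq_zero fun ω hω => by rw [hpos ω (Finset.mem_filter.1 hω).2, zero_mul]
  have hks : kstar r e p = 1 := by
    refine kstar_eq le_rfl ?_ fun j hj hj1 => by omega
    have := Lfun_succ (r := r) (e := e) (p := p) ⟨0, hK⟩
    simp only [zero_add] at this
    rw [this, hL0, zero_add]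
    exact mul_nonpos_of_nonneg_of_nonpos (hp _) (hneg _).le
  have hcoeff : ∀ i, piStarCoeff r e p i = 0 := fun i => by
    simp [piStarCoeff, hks, hL0]
  ext ω
  rw [piStar_apply]
  simp only [hcoeff, zero_mul, Finset.sum_const_zero, add_zero, Pi.zero_apply]
  split_ifs with hω
  exacts [hpos ω hω, rfl]

theorem aI_mem_Icc (he : Injective e) (hneg : ∀ i, r (e i) < 0) (hp : p ∈ stdSimplex ℝ Ω) :
    aI r e p ∈ Icc 0 1 :=
  ⟨Finset.sum_nonneg fun ω _ => piStar_nonneg hneg hp.1 ω,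
    hp.2 ▸ Finset.sum_le_sum fun ω _ => piStar_le he hneg hp.1 ω⟩

theorem qI_mem_stdSimplex (hneg : ∀ i, r (e i) < 0) (hp : 0 ≤ p) (ha : 0 < aI r e p) :
    qI r e p ∈ stdSimplex ℝ Ω :=
  inv_sum_smul_mem_stdSimplex (piStar_nonneg hneg hp) ha

theorem qJ_mem_stdSimplex (he : Injective e) (hneg : ∀ i, r (e i) < 0)
    (hp : p ∈ stdSimplex ℝ Ω) (ha : aI r e p < 1) : qJ r e p ∈ stdSimplex ℝ Ω := by
  have hsum : ∑ ω, (p - piStar r e p) ω = 1 - aI r e p := by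
    simp [Finset.sum_sub_distrib, hp.2, aI]
  have := inv_sum_smul_mem_stdSimplex (sub_nonneg.2 (piStar_le he hneg hp.1))
    (hsum ▸ sub_pos.2 ha)
  rwa [hsum] at this

theorem qJ_mem_negFace (he : Injective e) (hneg : ∀ i, r (e i) < 0)
    (hp : p ∈ stdSimplex ℝ Ω) (ha : aI r e p < 1) : qJ r e p ∈ negFace r :=
  ⟨qJ_mem_stdSimplex he hneg hp ha, fun ω hω => by simp [qJ, piStar_apply_of_nonneg hneg hω]⟩

end Greedy

theorem mul_le_mul_of_nonneg_of_pos_imp {a x y : ℝ} (ha : 0 ≤ a) (h : 0 < a → x ≤ y) :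
    a * x ≤ a * y := by
  rcases ha.eq_or_lt with rfl | ha
  · simp
  · exact mul_le_mul_of_nonneg_left (h ha) ha.le

section GreedyPayoff

variable [Fintype Ω] [DecidableEq Ω] {r : Ω → ℝ} {K : ℕ} {e : Fin K → Ω} {δ : ℝ}
  {φ : (Ω → ℝ) → Ω → ℝ} {γ : (Ω → ℝ) → ℝ}

theorem greedy_le_one (hδ : δ ∈ Ico 0 1) (he : Injective e) (hneg : ∀ i, r (e i) < 0)
    (hφ : MapsTo φ (stdSimplex ℝ Ω) (stdSimplex ℝ Ω)) (hγ : BddAbove (γ '' stdSimplex ℝ Ω))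
    (hγI : ∀ p ∈ invest r, γ p = (1 - δ) + δ * γ (φ p))
    (hγJ : ∀ p ∈ stdSimplex ℝ Ω, ∑ ω, p ω * r ω < 0 →
      γ p = aI r e p * ((1 - δ) + δ * γ (φ (qI r e p)))
        + (1 - aI r e p) * (δ * γ (φ (qJ r e p)))) :
    ∀ p ∈ stdSimplex ℝ Ω, γ p ≤ 1 := by
  refine forall_le_of_forall_le_add_mul hδ.2 hγ fun M hM p hp => ?_
  have hφM : ∀ q ∈ stdSimplex ℝ Ω, δ * γ (φ q) ≤ δ * M := fun q hq =>
    mul_le_mul_of_nonneg_left (hM _ (hφ hq)) hδ.1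
  rcases le_or_gt 0 (∑ ω, p ω * r ω) with hI | hJ
  · rw [hγI p ⟨hp, hI⟩]
    linarith [hφM p hp]
  · obtain ⟨ha0, ha1⟩ := aI_mem_Icc he hneg hp
    have hqI := mul_le_mul_of_nonneg_of_pos_imp ha0 fun ha =>
      add_le_add_left (hφM _ (qI_mem_stdSimplex hneg hp.1 ha)) (1 - δ)
    have hqJ := mul_le_mul_of_nonneg_of_pos_imp (sub_nonneg.2 ha1) fun ha =>
      hφM _ (qJ_mem_stdSimplex he hneg hp (sub_pos.1 ha))
    have := mul_le_mul_of_nonneg_right ha1 (sub_nonneg.2 hδ.2.le)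
    rw [hγJ p hp hJ]
    linarith

theorem greedy_nonpos_of_mem_negFace (hK : 0 < K) (hδ : δ ∈ Ico 0 1) (hneg : ∀ i, r (e i) < 0)
    (hφ : MapsTo φ (negFace r) (negFace r)) (hγ : BddAbove (γ '' negFace r))
    (hγJ : ∀ p ∈ stdSimplex ℝ Ω, ∑ ω, p ω * r ω < 0 →
      γ p = aI r e p * ((1 - δ) + δ * γ (φ (qI r e p)))
        + (1 - aI r e p) * (δ * γ (φ (qJ r e p)))) :
    ∀ p ∈ negFace r, γ p ≤ 0 := by
  refine forall_le_of_forall_le_add_mul hδ.2 hγ fun M hM p hp => ?_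
  have hπ := piStar_eq_zero hK hneg hp.1.1 hp.2
  have ha : aI r e p = 0 := by simp [aI, hπ]
  have hq : qJ r e p = p := by simp [qJ, ha, hπ]
  rw [hγJ p hp.1 (sum_mul_neg_of_mem_negFace hp), ha, hq]
  have := mul_le_mul_of_nonneg_left (hM _ (hφ hp)) hδ.1
  linarith

theorem greedy_le_aI (hK : 0 < K) (hδ : δ ∈ Ico 0 1) (he : Injective e)
    (hneg : ∀ i, r (e i) < 0) (hφ : MapsTo φ (stdSimplex ℝ Ω) (stdSimplex ℝ Ω))
    (hφF : MapsTo φ (negFace r) (negFace r)) (hγ : BddAbove (γ '' stdSimplex ℝ Ω))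
    (hγI : ∀ p ∈ invest r, γ p = (1 - δ) + δ * γ (φ p))
    (hγJ : ∀ p ∈ stdSimplex ℝ Ω, ∑ ω, p ω * r ω < 0 →
      γ p = aI r e p * ((1 - δ) + δ * γ (φ (qI r e p)))
        + (1 - aI r e p) * (δ * γ (φ (qJ r e p))))
    {p : Ω → ℝ} (hp : p ∈ stdSimplex ℝ Ω) (hpJ : ∑ ω, p ω * r ω < 0) : γ p ≤ aI r e p := by
  have hle1 := greedy_le_one hδ he hneg hφ hγ hγI hγJ
  have hle0 := greedy_nonpos_of_mem_negFace hK hδ hneg hφF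
    (hγ.mono (image_mono fun q hq => hq.1)) hγJ
  obtain ⟨ha0, ha1⟩ := aI_mem_Icc he hneg hp
  have hqI := mul_le_mul_of_nonneg_of_pos_imp (x := 1 - δ + δ * γ (φ (qI r e p))) (y := 1) ha0
    fun ha => by nlinarith [hle1 _ (hφ (qI_mem_stdSimplex hneg hp.1 ha)), hδ.1]
  have hqJ := mul_le_mul_of_nonneg_of_pos_imp (sub_nonneg.2 ha1) fun ha =>
    show _ ≤ (0 : ℝ) from mul_nonpos_of_nonneg_of_nonpos hδ.1
      (hle0 _ (hφF (qJ_mem_negFace he hneg hp (sub_pos.1 ha))))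
  rw [hγJ p hp hpJ]
  linarith

end GreedyPayoff

section DynamicProgramming

variable [Fintype Ω] {r : Ω → ℝ} {δ : ℝ} {φ : (Ω → ℝ) → Ω → ℝ} {V : (Ω → ℝ) → ℝ}

theorem dirac_mem_splittings {p : Ω → ℝ} (hp : p ∈ stdSimplex ℝ Ω) :
    Measure.dirac p ∈ Splittings p :=
  ⟨inferInstance, Measure.dirac_apply_of_mem hp, integral_dirac _ _⟩

theorem twoPoint_mem_splittings {u v : Ω → ℝ} (hu : u ∈ stdSimplex ℝ Ω)
    (hv : v ∈ stdSimplex ℝ Ω) {t : ℝ} (ht : t ∈ Icc 0 1) :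
    ENNReal.ofReal t • Measure.dirac u + ENNReal.ofReal (1 - t) • Measure.dirac v
      ∈ Splittings (t • u + (1 - t) • v) := by
  have hsum : ENNReal.ofReal t + ENNReal.ofReal (1 - t) = 1 := by
    rw [← ENNReal.ofReal_add ht.1 (sub_nonneg.2 ht.2)]; simp
  refine ⟨⟨by simp [hsum]⟩, by simp [Measure.dirac_apply_of_mem hu,
    Measure.dirac_apply_of_mem hv, hsum], ?_⟩
  rw [integral_add_measure ((integrable_dirac (by simp)).smul_measure (by simp))
      ((integrable_dirac (by simp)).smul_measure (by simp)),
    integral_smul_measure, integral_smul_measure, integral_dirac, integral_dirac,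
    ENNReal.toReal_ofReal ht.1, ENNReal.toReal_ofReal (sub_nonneg.2 ht.2)]

theorem le_dppPayoff_twoPoint (hδ : δ ∈ Ico 0 1) (hV0 : ∀ q ∈ stdSimplex ℝ Ω, 0 ≤ V (φ q))
    {u v : Ω → ℝ} (hu : u ∈ invest r) (t : ℝ) :
    (1 - δ) * t
      ≤ dppPayoff r δ φ V (ENNReal.ofReal t • Measure.dirac u
          + ENNReal.ofReal (1 - t) • Measure.dirac v) := by
  set μ := ENNReal.ofReal t • Measure.dirac u + ENNReal.ofReal (1 - t) • Measure.dirac v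
  have hI : t ≤ (μ (invest r)).toReal := by
    have hμI : μ (invest r)
        = ENNReal.ofReal t + ENNReal.ofReal (1 - t) * Measure.dirac v (invest r) := by
      simp [μ, Measure.dirac_apply_of_mem hu]
    rw [← ENNReal.ofReal_le_iff_le_toReal (hμI ▸ ENNReal.add_ne_top.2
      ⟨ENNReal.ofReal_ne_top, ENNReal.mul_ne_top ENNReal.ofReal_ne_top (measure_ne_top _ _)⟩)]
    exact hμI ▸ le_self_add
  have hint : 0 ≤ ∫ q in stdSimplex ℝ Ω, V (φ q) ∂μ :=
    setIntegral_nonneg (isClosed_stdSimplex ℝ Ω).measurableSet hV0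
  have := mul_le_mul_of_nonneg_left hI (sub_nonneg.2 hδ.2.le)
  have := mul_nonneg hδ.1 hint
  simp only [dppPayoff]
  linarith

variable {C : ℝ} (hδ : δ ∈ Ico 0 1) (hφ : MapsTo φ (stdSimplex ℝ Ω) (stdSimplex ℝ Ω))
  (hV : ∀ q ∈ stdSimplex ℝ Ω, |V q| ≤ C)
include hδ hφ hV

theorem bddAbove_dppPayoff (p : Ω → ℝ) : BddAbove (dppPayoff r δ φ V '' Splittings p) := by
  refine ⟨(1 - δ) + δ * |C|, forall_mem_image.2 fun μ hμ => ?_⟩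
  have := hμ.1
  have hI : (μ (invest r)).toReal ≤ 1 := measureReal_le_one
  have hint : ∫ q in stdSimplex ℝ Ω, V (φ q) ∂μ ≤ |C| :=
    calc ∫ q in stdSimplex ℝ Ω, V (φ q) ∂μ
        ≤ ‖∫ q in stdSimplex ℝ Ω, V (φ q) ∂μ‖ := Real.le_norm_self _
      _ ≤ |C| * μ.real (stdSimplex ℝ Ω) := norm_setIntegral_le_of_norm_le_const
          (measure_lt_top μ _) fun q hq => (hV _ (hφ hq)).trans (le_abs_self C)
      _ ≤ |C| := mul_le_of_le_one_right (abs_nonneg C) measureReal_le_one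
  have := mul_le_mul_of_nonneg_left hI (sub_nonneg.2 hδ.2.le)
  have := mul_le_mul_of_nonneg_left hint hδ.1
  simp only [dppPayoff]
  linarith

theorem dppPayoff_le_of_satisfiesDPP (hDPP : SatisfiesDPP r δ φ V) {p : Ω → ℝ}
    (hp : p ∈ stdSimplex ℝ Ω) {μ : Measure (Ω → ℝ)} (hμ : μ ∈ Splittings p) :
    dppPayoff r δ φ V μ ≤ V p := by
  rw [hDPP p hp]
  exact le_csSup (bddAbove_dppPayoff hδ hφ hV p) (mem_image_of_mem _ hμ)

theorem mul_le_of_satisfiesDPP (hDPP : SatisfiesDPP r δ φ V) {p : Ω → ℝ}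
    (hp : p ∈ stdSimplex ℝ Ω) : δ * V (φ p) ≤ V p := by
  classical
  refine le_trans ?_ (dppPayoff_le_of_satisfiesDPP hδ hφ hV hDPP hp (dirac_mem_splittings hp))
  rw [dppPayoff, setIntegral_dirac, if_pos hp]
  have := mul_nonneg (sub_nonneg.2 hδ.2.le)
    (ENNReal.toReal_nonneg (a := Measure.dirac p (invest r)))
  linarith

theorem nonneg_of_satisfiesDPP (hDPP : SatisfiesDPP r δ φ V) :
    ∀ p ∈ stdSimplex ℝ Ω, 0 ≤ V p := by
  have hbdd : BddAbove ((fun p => -V p) '' stdSimplex ℝ Ω) :=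
    ⟨C, forall_mem_image.2 fun p hp => (neg_le_abs (V p)).trans (hV p hp)⟩
  have := forall_le_of_forall_le_add_mul (b := 0) hδ.2 hbdd fun M hM p hp => by
    have := mul_le_of_satisfiesDPP hδ hφ hV hDPP hp
    have := mul_le_mul_of_nonneg_left (hM _ (hφ hp)) hδ.1
    linarith
  exact fun p hp => neg_nonpos.1 (this p hp)

theorem le_of_satisfiesDPP_of_eq_twoPoint (hDPP : SatisfiesDPP r δ φ V) {p u v : Ω → ℝ}
    (hp : p ∈ stdSimplex ℝ Ω) (hu : u ∈ invest r) (hv : v ∈ stdSimplex ℝ Ω) {t : ℝ}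
    (ht : t ∈ Icc 0 1) (hφp : φ p = t • u + (1 - t) • v) : δ * ((1 - δ) * t) ≤ V p := by
  have hV0 := nonneg_of_satisfiesDPP hδ hφ hV hDPP
  have hμ := twoPoint_mem_splittings hu.1 hv ht
  rw [← hφp] at hμ
  have h1 := le_dppPayoff_twoPoint (v := v) hδ (fun q hq => hV0 _ (hφ hq)) hu t
  have h2 := dppPayoff_le_of_satisfiesDPP hδ hφ hV hDPP (hφ hp) hμ
  calc δ * ((1 - δ) * t) ≤ δ * V (φ p) := mul_le_mul_of_nonneg_left (h1.trans h2) hδ.1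
    _ ≤ V p := mul_le_of_satisfiesDPP hδ hφ hV hDPP hp

end DynamicProgramming

theorem mapsTo_homothety {E : Type*} [AddCommGroup E] [Module ℝ E] {s : Set E}
    (hs : Convex ℝ s) {m : E} (hm : m ∈ s) {t : ℝ} (ht : t ∈ Icc 0 1) :
    MapsTo (fun p => m + t • (p - m)) s s :=
  fun _ hp => hs.add_smul_sub_mem hm hp ht

section Example

theorem mem_stdSimplex_three {a b c : ℝ} (ha : 0 ≤ a) (hb : 0 ≤ b) (hc : 0 ≤ c)
    (h : a + b + c = 1) : ![a, b, c] ∈ stdSimplex ℝ (Fin 3) :=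
  ⟨fun i => by fin_cases i <;> assumption, by simpa [Fin.sum_univ_three] using h⟩

variable {ε : ℝ}

theorem neg_payoff_example (hε : 0 < ε) (hε1 : ε < 1) :
    ∀ i, ![1, -(ε / (1 - ε)), -1] (![1, 2] i : Fin 3) < 0 := by
  simp [Fin.forall_fin_two, div_pos hε (sub_pos.2 hε1)]

theorem mem_negFace_example (hε : 0 < ε) (hε1 : ε < 1) :
    ![0, 1, 0] ∈ negFace ![1, -(ε / (1 - ε)), -1] :=
  ⟨mem_stdSimplex_three le_rfl zero_le_one le_rfl (by norm_num), fun ω hω => by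
    fin_cases ω <;> simp at hω ⊢; linarith [div_pos hε (sub_pos.2 hε1)]⟩

theorem mem_invest_example (hε : 0 < ε) (hε2 : 2 * ε ≤ 1) :
    ![2 * ε, 1 - 2 * ε, 0] ∈ invest ![1, -(ε / (1 - ε)), -1] := by
  refine ⟨mem_stdSimplex_three (by linarith) (by linarith) le_rfl (by ring), ?_⟩
  have : ε / (1 - ε) ≤ 2 * ε := by rw [div_le_iff₀ (by linarith)]; nlinarith
  simp [Fin.sum_univ_three]
  nlinarith

theorem aI_example (hε : 0 < ε) (hε4 : 4 * ε < 1) :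
    aI ![1, -(ε / (1 - ε)), -1] ![1, 2] ![2 * ε, 0, 1 - 2 * ε] = 4 * ε := by
  have hc : ¬0 ≤ -(ε / (1 - ε)) := by
    have : 0 < ε / (1 - ε) := div_pos hε (by linarith)
    linarith
  have hL1 : Lfun ![1, -(ε / (1 - ε)), -1] ![1, 2] 1 ![2 * ε, 0, 1 - 2 * ε] = 2 * ε := by
    simp [Lfun, Finset.sum_filter, Fin.sum_univ_three, hc]
  have hL2 : Lfun ![1, -(ε / (1 - ε)), -1] ![1, 2] 2 ![2 * ε, 0, 1 - 2 * ε] = 4 * ε - 1 := by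
    simp [Lfun, Finset.sum_filter, Fin.sum_univ_three, hc]
    norm_num
    ring
  have hks : kstar ![1, -(ε / (1 - ε)), -1] ![1, 2] ![2 * ε, 0, 1 - 2 * ε] = 2 :=
    kstar_eq (by norm_num) (by linarith) fun j hj hj2 => by
      obtain rfl : j = 1 := by omega
      linarith
  simp [aI, piStar_eq, piStarCoeff, hks, Fin.sum_univ_three, Fin.sum_univ_two,
    Pi.single_apply, hc, hL1]
  norm_num
  ring

end Example

/-- with three states the greedy strategy need not be optimal, even when `φ`
is a homothety. With `r = (1, −ε/(1−ε), −1)`, invariant distribution the Dirac mass on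
state 2, ratio `1/2`, and initial belief `p₁ = (2ε, 0, 1−2ε)`, if `8ε < δ(1−δ)` then the
greedy payoff satisfies `γ(p₁) ≤ 4ε` while every bounded solution `V` of the dynamic
programming equation satisfies `V(p₁) ≥ δ(1−δ)/2 > γ(p₁)`. -/
theorem greedy_not_optimal
    (ε δ : ℝ) (hε : 0 < ε) (hδ : δ ∈ Set.Ioo (0 : ℝ) 1) (hcounter : 8 * ε < δ * (1 - δ))
    (r : Fin 3 → ℝ) (hr : r = ![1, -(ε / (1 - ε)), -1])
    (e : Fin 2 → Fin 3) (he : e = ![1, 2])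
    (m : Fin 3 → ℝ) (hm : m = ![0, 1, 0])
    (φ : (Fin 3 → ℝ) → Fin 3 → ℝ) (hφ : ∀ p, φ p = m + (1 / 2 : ℝ) • (p - m))
    (p₁ : Fin 3 → ℝ) (hp₁ : p₁ = ![2 * ε, 0, 1 - 2 * ε])
    (γ : (Fin 3 → ℝ) → ℝ)
    (hγb : ∃ C, ∀ p ∈ stdSimplex ℝ (Fin 3), |γ p| ≤ C)
    (hγI : ∀ p ∈ invest r, γ p = (1 - δ) + δ * γ (φ p))
    (hγJ : ∀ p ∈ stdSimplex ℝ (Fin 3), ∑ ω, p ω * r ω < 0 →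
      γ p = aI r e p * ((1 - δ) + δ * γ (φ (qI r e p)))
        + (1 - aI r e p) * (δ * γ (φ (qJ r e p)))) :
    γ p₁ ≤ 4 * ε ∧
    ∀ V : (Fin 3 → ℝ) → ℝ, (∃ C, ∀ p ∈ stdSimplex ℝ (Fin 3), |V p| ≤ C) →
      SatisfiesDPP r δ φ V → δ * (1 - δ) / 2 ≤ V p₁ ∧ γ p₁ < V p₁ := by
  obtain ⟨hδ0, hδ1⟩ := hδ
  have hδ' : δ ∈ Ico 0 1 := ⟨hδ0.le, hδ1⟩
  have hε4 : 4 * ε < 1 := by nlinarith [sq_nonneg (2 * δ - 1)]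
  obtain rfl : φ = fun p => m + (1 / 2 : ℝ) • (p - m) := funext hφ
  subst hr he hm hp₁
  have hhalf : (1 / 2 : ℝ) ∈ Icc 0 1 := by norm_num
  have hφS := mapsTo_homothety (convex_stdSimplex ℝ _)
    (mem_stdSimplex_three le_rfl zero_le_one le_rfl (by norm_num)) hhalf
  have hφF := mapsTo_homothety convex_negFace (mem_negFace_example hε (by linarith)) hhalf
  have hp₁ := mem_stdSimplex_three (by linarith) le_rfl (by linarith)
    (by ring : 2 * ε + 0 + (1 - 2 * ε) = 1)
  have hγp₁ : γ ![2 * ε, 0, 1 - 2 * ε] ≤ 4 * ε := by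
    obtain ⟨C, hC⟩ := hγb
    rw [← aI_example hε hε4]
    exact greedy_le_aI two_pos hδ' (by decide) (neg_payoff_example hε (by linarith)) hφS hφF
      ⟨C, forall_mem_image.2 fun p hp => (le_abs_self _).trans (hC p hp)⟩ hγI hγJ hp₁
      (by simp [Fin.sum_univ_three]; linarith)
  refine ⟨hγp₁, fun V ⟨C, hC⟩ hDPP => ?_⟩
  have hV := le_of_satisfiesDPP_of_eq_twoPoint hδ' hφS hC hDPP hp₁
    (mem_invest_example hε (by linarith))
    (mem_stdSimplex_three le_rfl (by linarith) (by linarith)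
      (by ring : 0 + 2 * ε + (1 - 2 * ε) = 1))
    hhalf (by ext i; fin_cases i <;> norm_num; ring)
  constructor <;> nlinarith

end
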